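/- Hölder inequality in Lorentz spaces: if f ∈ L^{(p₁,q₁)}(ℝⁿ) and g ∈ L^{(p₂,q₂)}(ℝⁿ) with 1 < p₁, p₂ < ∞, 1 ≤ q₁, q₂ ≤ ∞, then fg ∈ L^{(r,s)}(ℝⁿ) where 1/r = 1/p₁ + 1/p₂ and 1/s = 1/q₁ + 1/q₂ (assuming r > 1 or appropriately interpreted), with ‖fg‖_{L^{(r,s)}} ≤ C ‖f‖_{L^{(p₁,q₁)}} ‖g‖_{L^{(p₂,q₂)}}. -/

import Mathlib

/-!
If `|f x g x| > f*(t₁) g*(t₂)` then `|f x| > f*(t₁)` or `|g x| > g*(t₂)`, so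
`(fg)*(t₁ + t₂) ≤ f*(t₁) g*(t₂)`. Taking `t₁ = t₂ = t` and `(2t)^{1/r} = 2^{1/r} t^{1/p₁} t^{1/p₂}`,
the profile `t^{1/r} (fg)*(t)` evaluated at `2t` is at most `2^{1/r}` times the product of the
profiles of `f` and `g` at `t`. The measure `dt/t` is dilation invariant, so the `L^{(r,s)}` norm
of `fg` is at most `2^{1/r}` times the `L^s(dt/t)` norm of that product, which Hölder's
inequality for `dt/t` (with the supremum in the endpoint cases) bounds by the product of the
`L^{q₁}` and `L^{q₂}` norms, i.e. of the two Lorentz norms.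
-/

open MeasureTheory Set
open scoped ENNReal

/-- The decreasing rearrangement of `f` (`ℝ≥0∞`-valued). -/
noncomputable def rearrangement {n : ℕ} (f : EuclideanSpace ℝ (Fin n) → ℝ) (t : ℝ) : ℝ≥0∞ :=
  sInf {s : ℝ≥0∞ |
    volume {x : EuclideanSpace ℝ (Fin n) | s < (‖f x‖₊ : ℝ≥0∞)} ≤ ENNReal.ofReal t}

/-- The Lorentz `L^{(p,q)}` (quasi-)norm, defined via the decreasing rearrangement:
`(∫₀^∞ (t^{1/p} f*(t))^q dt/t)^{1/q}` for `q < ∞`, and `sup_{t>0} t^{1/p} f*(t)` for `q = ∞`. -/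
noncomputable def lorentzNorm {n : ℕ} (p : ℝ) (q : ℝ≥0∞)
    (f : EuclideanSpace ℝ (Fin n) → ℝ) : ℝ≥0∞ :=
  if q = ⊤ then ⨆ t ∈ Ioi (0:ℝ), ENNReal.ofReal (t ^ (1/p)) * rearrangement f t
  else (∫⁻ t in Ioi (0:ℝ),
      (ENNReal.ofReal (t ^ (1/p)) * rearrangement f t) ^ q.toReal / ENNReal.ofReal t) ^
      (1 / q.toReal)

section

variable {n : ℕ}

lemma rearrangement_antitone (f : EuclideanSpace ℝ (Fin n) → ℝ) :
    Antitone (rearrangement f) :=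
  fun _ _ h => sInf_le_sInf fun _ hs => hs.trans (ENNReal.ofReal_le_ofReal h)

@[fun_prop]
lemma measurable_rearrangement (f : EuclideanSpace ℝ (Fin n) → ℝ) :
    Measurable (rearrangement f) :=
  (rearrangement_antitone f).measurable

/-- The infimum defining `f*(t)` is attained: the set of admissible levels is upward closed and
the distribution function is continuous from the right, so a sequence of admissible levels
decreasing to the infimum exhausts `{f*(t) < |f|}` by an increasing union. -/
lemma volume_rearrangement_lt_le (f : EuclideanSpace ℝ (Fin n) → ℝ) (t : ℝ) :
    volume {x | rearrangement f t < (‖f x‖₊ : ℝ≥0∞)} ≤ ENNReal.ofReal t := by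
  obtain ⟨u, hu_anti, hu_lim, hu_mem⟩ := exists_seq_tendsto_sInf (α := ℝ≥0∞)
    (S := {s | volume {x : EuclideanSpace ℝ (Fin n) | s < (‖f x‖₊ : ℝ≥0∞)} ≤ ENNReal.ofReal t})
    ⟨⊤, by simp⟩ (OrderBot.bddBelow _)
  have h_union : {x | rearrangement f t < (‖f x‖₊ : ℝ≥0∞)} =
      ⋃ k, {x | u k < (‖f x‖₊ : ℝ≥0∞)} := by
    ext x
    simp only [mem_ofPred_eq, mem_iUnion]
    refine ⟨fun hx => (hu_lim.eventually (gt_mem_nhds hx)).exists, ?_⟩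
    rintro ⟨k, hk⟩
    exact lt_of_le_of_lt (sInf_le (hu_mem k)) hk
  have h_mono : Monotone fun k => {x : EuclideanSpace ℝ (Fin n) | u k < (‖f x‖₊ : ℝ≥0∞)} :=
    fun _ _ hkl _ hx => lt_of_le_of_lt (hu_anti hkl) hx
  rw [h_union, h_mono.measure_iUnion]
  exact iSup_le hu_mem

lemma rearrangement_mul_le (f g : EuclideanSpace ℝ (Fin n) → ℝ) {t₁ t₂ : ℝ}
    (ht₁ : 0 ≤ t₁) (ht₂ : 0 ≤ t₂) :
    rearrangement (fun x => f x * g x) (t₁ + t₂) ≤ rearrangement f t₁ * rearrangement g t₂ := by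
  refine sInf_le ?_
  have h_sub : {x | rearrangement f t₁ * rearrangement g t₂ < (‖f x * g x‖₊ : ℝ≥0∞)} ⊆
      {x | rearrangement f t₁ < (‖f x‖₊ : ℝ≥0∞)} ∪ {x | rearrangement g t₂ < (‖g x‖₊ : ℝ≥0∞)} := by
    intro x hx
    by_contra h
    simp only [mem_union, mem_ofPred_eq, not_or, not_lt] at h
    simp only [mem_ofPred_eq, nnnorm_mul, ENNReal.coe_mul] at hx
    exact hx.not_ge (mul_le_mul' h.1 h.2)
  calc volume {x | rearrangement f t₁ * rearrangement g t₂ < (‖f x * g x‖₊ : ℝ≥0∞)}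
      ≤ volume {x | rearrangement f t₁ < (‖f x‖₊ : ℝ≥0∞)} +
          volume {x | rearrangement g t₂ < (‖g x‖₊ : ℝ≥0∞)} :=
        (measure_mono h_sub).trans (measure_union_le _ _)
    _ ≤ ENNReal.ofReal t₁ + ENNReal.ofReal t₂ :=
        add_le_add (volume_rearrangement_lt_le f t₁) (volume_rearrangement_lt_le g t₂)
    _ = ENNReal.ofReal (t₁ + t₂) := (ENNReal.ofReal_add ht₁ ht₂).symm

lemma setLIntegral_Ioi_comp_mul_left {a : ℝ} (ha : 0 < a) (F : ℝ → ℝ≥0∞) :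
    ∫⁻ t in Ioi 0, F (a * t) = ENNReal.ofReal a⁻¹ * ∫⁻ t in Ioi 0, F t := by
  have h_emb := measurableEmbedding_mulLeft₀ ha.ne'
  have h_pre : (fun t => a * t) ⁻¹' Ioi 0 = Ioi 0 := by
    rw [preimage_const_mul_Ioi₀ 0 ha, zero_div]
  rw [← h_emb.lintegral_map, ← h_pre, ← h_emb.restrict_map, h_pre,
    Real.map_volume_mul_left ha.ne', Measure.restrict_smul, lintegral_smul_measure, smul_eq_mul,
    abs_of_pos (inv_pos.mpr ha)]

lemma setLIntegral_Ioi_comp_mul_left_div {a : ℝ} (ha : 0 < a) (F : ℝ → ℝ≥0∞) :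
    ∫⁻ t in Ioi 0, F (a * t) / ENNReal.ofReal t = ∫⁻ t in Ioi 0, F t / ENNReal.ofReal t := by
  have h_pt : ∀ t ∈ Ioi (0:ℝ), F (a * t) / ENNReal.ofReal t =
      ENNReal.ofReal a * (F (a * t) / ENNReal.ofReal (a * t)) := by
    intro t ht
    rw [ENNReal.ofReal_mul ha.le, ENNReal.div_eq_inv_mul, ENNReal.div_eq_inv_mul,
      ENNReal.mul_inv (by simp [ha]) (by simp), ← mul_assoc, ← mul_assoc,
      ENNReal.mul_inv_cancel (by simp [ha]) ENNReal.ofReal_ne_top, one_mul]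
  rw [setLIntegral_congr_fun measurableSet_Ioi h_pt, lintegral_const_mul' _ _ ENNReal.ofReal_ne_top,
    setLIntegral_Ioi_comp_mul_left ha (fun t => F t / ENNReal.ofReal t), ← mul_assoc,
    ← ENNReal.ofReal_mul ha.le, mul_inv_cancel₀ ha.ne', ENNReal.ofReal_one, one_mul]

noncomputable def mulHaarIoi : Measure ℝ :=
  (volume.restrict (Ioi 0)).withDensity fun t => (ENNReal.ofReal t)⁻¹

lemma lintegral_mulHaarIoi (F : ℝ → ℝ≥0∞) :
    ∫⁻ t, F t ∂mulHaarIoi = ∫⁻ t in Ioi 0, F t / ENNReal.ofReal t := by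
  rw [mulHaarIoi, lintegral_withDensity_eq_lintegral_mul_non_measurable _ (by fun_prop)]
  · simp only [Pi.mul_apply, div_eq_mul_inv, mul_comm]
  · filter_upwards [ae_restrict_mem measurableSet_Ioi] with t ht
    simpa using ht

lemma ae_mulHaarIoi_pos : ∀ᵐ t ∂mulHaarIoi, 0 < t :=
  withDensity_absolutelyContinuous _ _ (ae_restrict_mem measurableSet_Ioi)

/-- `‖F‖_{L^q(dt/t)}`, except that for `q = ∞` it is the supremum over `(0, ∞)` rather than the
essential supremum, as in `lorentzNorm`. -/
noncomputable def profileNorm (q : ℝ≥0∞) (F : ℝ → ℝ≥0∞) : ℝ≥0∞ :=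
  if q = ⊤ then ⨆ t ∈ Ioi (0:ℝ), F t
  else (∫⁻ t, F t ^ q.toReal ∂mulHaarIoi) ^ (1 / q.toReal)

noncomputable def lorentzProfile (p : ℝ) (f : EuclideanSpace ℝ (Fin n) → ℝ) (t : ℝ) : ℝ≥0∞ :=
  ENNReal.ofReal (t ^ (1/p)) * rearrangement f t

@[fun_prop]
lemma measurable_lorentzProfile (p : ℝ) (f : EuclideanSpace ℝ (Fin n) → ℝ) :
    Measurable (lorentzProfile p f) := by
  unfold lorentzProfile
  fun_prop

lemma lorentzNorm_eq_profileNorm (p : ℝ) (q : ℝ≥0∞) (f : EuclideanSpace ℝ (Fin n) → ℝ) :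
    lorentzNorm p q f = profileNorm q (lorentzProfile p f) := by
  unfold lorentzNorm profileNorm lorentzProfile
  split_ifs
  · rfl
  · rw [lintegral_mulHaarIoi]

lemma profileNorm_mono (q : ℝ≥0∞) {F G : ℝ → ℝ≥0∞} (h : ∀ t, 0 < t → F t ≤ G t) :
    profileNorm q F ≤ profileNorm q G := by
  unfold profileNorm
  split_ifs
  · exact iSup₂_mono fun t ht => h t ht
  · gcongr ?_ ^ _
    refine lintegral_mono_ae ?_
    filter_upwards [ae_mulHaarIoi_pos] with t ht
    gcongr
    exact h t ht

lemma profileNorm_const_mul {q : ℝ≥0∞} (hq : q ≠ 0) (c : ℝ≥0∞) {F : ℝ → ℝ≥0∞}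
    (hF : AEMeasurable F mulHaarIoi) :
    profileNorm q (fun t => c * F t) = c * profileNorm q F := by
  unfold profileNorm
  split_ifs with h_top
  · simp only [ENNReal.mul_iSup]
  · have hσ : 0 < q.toReal := ENNReal.toReal_pos hq h_top
    simp_rw [ENNReal.mul_rpow_of_nonneg _ _ hσ.le]
    rw [lintegral_const_mul'' _ (hF.pow_const _), ENNReal.mul_rpow_of_nonneg _ _ (by positivity),
      one_div, ENNReal.rpow_rpow_inv hσ.ne']

lemma profileNorm_comp_mul_left (q : ℝ≥0∞) {a : ℝ} (ha : 0 < a) (F : ℝ → ℝ≥0∞) :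
    profileNorm q (fun t => F (a * t)) = profileNorm q F := by
  unfold profileNorm
  split_ifs
  · refine le_antisymm (iSup₂_le fun t ht => le_biSup F (mul_pos ha ht))
      (iSup₂_le fun t ht => ?_)
    rw [← mul_div_cancel₀ t ha.ne']
    exact le_biSup (fun t => F (a * t)) (div_pos ht ha)
  · rw [lintegral_mulHaarIoi, lintegral_mulHaarIoi,
      setLIntegral_Ioi_comp_mul_left_div ha fun t => F t ^ q.toReal]

lemma profileNorm_mul_le_iSup_mul {q : ℝ≥0∞} (hq : q ≠ 0) (F : ℝ → ℝ≥0∞) {G : ℝ → ℝ≥0∞}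
    (hG : AEMeasurable G mulHaarIoi) :
    profileNorm q (F * G) ≤ (⨆ t ∈ Ioi (0:ℝ), F t) * profileNorm q G :=
  calc profileNorm q (F * G)
      ≤ profileNorm q fun t => (⨆ u ∈ Ioi (0:ℝ), F u) * G t :=
        profileNorm_mono q fun _ ht => mul_le_mul_left (le_biSup F ht) _
    _ = (⨆ t ∈ Ioi (0:ℝ), F t) * profileNorm q G := profileNorm_const_mul hq _ hG

theorem profileNorm_mul_le {q₁ q₂ s : ℝ≥0∞} (hq₁ : q₁ ≠ 0) (hq₂ : q₂ ≠ 0)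
    (hs : s⁻¹ = q₁⁻¹ + q₂⁻¹) {F G : ℝ → ℝ≥0∞} (hF : AEMeasurable F mulHaarIoi)
    (hG : AEMeasurable G mulHaarIoi) :
    profileNorm s (F * G) ≤ profileNorm q₁ F * profileNorm q₂ G := by
  rcases eq_or_ne q₁ ⊤ with rfl | hq₁_top
  · obtain rfl : s = q₂ := by simpa using hs
    simpa only [profileNorm, if_true] using profileNorm_mul_le_iSup_mul hq₂ F hG
  rcases eq_or_ne q₂ ⊤ with rfl | hq₂_top
  · obtain rfl : s = q₁ := by simpa using hs
    rw [mul_comm F, mul_comm (profileNorm s F)]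
    simpa only [profileNorm, if_true] using profileNorm_mul_le_iSup_mul hq₁ G hF
  have hσ₁ : 0 < q₁.toReal := ENNReal.toReal_pos hq₁ hq₁_top
  have hσ₂ : 0 < q₂.toReal := ENNReal.toReal_pos hq₂ hq₂_top
  have hs_top : s ≠ ⊤ := by
    rintro rfl
    rw [ENNReal.inv_top, eq_comm, add_eq_zero, ENNReal.inv_eq_zero] at hs
    exact hq₁_top hs.1
  have h_exp : 1 / s.toReal = 1 / q₁.toReal + 1 / q₂.toReal := by
    simpa [ENNReal.toReal_add, hq₁, hq₂] using congrArg ENNReal.toReal hs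
  have hσ : 0 < s.toReal := one_div_pos.mp (h_exp ▸ by positivity)
  have hσ_lt : s.toReal < q₁.toReal :=
    lt_of_one_div_lt_one_div hσ₁ (h_exp ▸ lt_add_of_pos_right _ (by positivity))
  simp only [profileNorm, if_neg hs_top, if_neg hq₁_top, if_neg hq₂_top]
  exact ENNReal.lintegral_Lp_mul_le_Lq_mul_Lr hσ hσ_lt h_exp _ hF hG

lemma lorentzProfile_mul_le {p₁ p₂ r : ℝ} (hr : 1/r = 1/p₁ + 1/p₂)
    (f g : EuclideanSpace ℝ (Fin n) → ℝ) {t : ℝ} (ht : 0 < t) :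
    lorentzProfile r (fun x => f x * g x) (2 * t) ≤
      ENNReal.ofReal (2 ^ (1/r)) * (lorentzProfile p₁ f t * lorentzProfile p₂ g t) := by
  have h_pow : (2 * t) ^ (1/r) = 2 ^ (1/r) * (t ^ (1/p₁) * t ^ (1/p₂)) := by
    rw [Real.mul_rpow zero_le_two ht.le, hr, Real.rpow_add ht]
  calc lorentzProfile r (fun x => f x * g x) (2 * t)
      ≤ ENNReal.ofReal ((2 * t) ^ (1/r)) * (rearrangement f t * rearrangement g t) := by
        rw [lorentzProfile, two_mul]
        gcongr
        exact rearrangement_mul_le f g ht.le ht.le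
    _ = ENNReal.ofReal (2 ^ (1/r)) * (lorentzProfile p₁ f t * lorentzProfile p₂ g t) := by
        rw [h_pow, ENNReal.ofReal_mul (by positivity), ENNReal.ofReal_mul (by positivity),
          lorentzProfile, lorentzProfile]
        ring

end

theorem stmt_6_general (n : ℕ) (p₁ p₂ : ℝ) (q₁ q₂ : ℝ≥0∞)
    (hq₁ : 1 ≤ q₁) (hq₂ : 1 ≤ q₂)
    (r : ℝ) (s : ℝ≥0∞) (hr : 1/r = 1/p₁ + 1/p₂)
    (hs : s⁻¹ = q₁⁻¹ + q₂⁻¹) :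
    ∃ C : ℝ≥0∞, 0 < C ∧ C ≠ ⊤ ∧
      ∀ f g : EuclideanSpace ℝ (Fin n) → ℝ, Measurable f → Measurable g →
        lorentzNorm r s (fun x => f x * g x) ≤
          C * lorentzNorm p₁ q₁ f * lorentzNorm p₂ q₂ g := by
  refine ⟨ENNReal.ofReal (2 ^ (1/r)), by positivity, ENNReal.ofReal_ne_top, fun f g _ _ => ?_⟩
  have hq₁_pos : 0 < q₁ := one_pos.trans_le hq₁
  have hq₂_pos : 0 < q₂ := one_pos.trans_le hq₂
  have hs_ne : s ≠ 0 := by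
    rintro rfl
    rw [ENNReal.inv_zero] at hs
    exact (ENNReal.add_lt_top.mpr ⟨ENNReal.inv_lt_top.mpr hq₁_pos,
      ENNReal.inv_lt_top.mpr hq₂_pos⟩).ne hs.symm
  simp only [lorentzNorm_eq_profileNorm]
  calc profileNorm s (lorentzProfile r fun x => f x * g x)
      = profileNorm s fun t => lorentzProfile r (fun x => f x * g x) (2 * t) :=
        (profileNorm_comp_mul_left s two_pos _).symm
    _ ≤ profileNorm s fun t =>
          ENNReal.ofReal (2 ^ (1/r)) * (lorentzProfile p₁ f t * lorentzProfile p₂ g t) :=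
        profileNorm_mono s fun _ ht => lorentzProfile_mul_le hr f g ht
    _ = ENNReal.ofReal (2 ^ (1/r)) * profileNorm s (lorentzProfile p₁ f * lorentzProfile p₂ g) :=
        profileNorm_const_mul hs_ne _ (by fun_prop)
    _ ≤ ENNReal.ofReal (2 ^ (1/r)) * profileNorm q₁ (lorentzProfile p₁ f) *
          profileNorm q₂ (lorentzProfile p₂ g) := by
        rw [mul_assoc]
        gcongr
        exact profileNorm_mul_le hq₁_pos.ne' hq₂_pos.ne' hs (by fun_prop) (by fun_prop)

/-- Hölder inequality in Lorentz spaces: if `f ∈ L^{(p₁,q₁)}` and `g ∈ L^{(p₂,q₂)}` with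
`1 < p₁, p₂ < ∞`, `1 ≤ q₁, q₂ ≤ ∞`, then `fg ∈ L^{(r,s)}` where `1/r = 1/p₁ + 1/p₂` and
`1/s = 1/q₁ + 1/q₂`, with `‖fg‖_{(r,s)} ≤ C ‖f‖_{(p₁,q₁)} ‖g‖_{(p₂,q₂)}`. -/
theorem stmt_6 (n : ℕ) (hn : 1 ≤ n) (p₁ p₂ : ℝ) (q₁ q₂ : ℝ≥0∞)
    (hp₁ : 1 < p₁) (hp₂ : 1 < p₂) (hq₁ : 1 ≤ q₁) (hq₂ : 1 ≤ q₂)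
    (r : ℝ) (s : ℝ≥0∞) (hr : 1/r = 1/p₁ + 1/p₂) (hr1 : 1 < r)
    (hs : s⁻¹ = q₁⁻¹ + q₂⁻¹) :
    ∃ C : ℝ≥0∞, 0 < C ∧ C ≠ ⊤ ∧
      ∀ f g : EuclideanSpace ℝ (Fin n) → ℝ, Measurable f → Measurable g →
        lorentzNorm r s (fun x => f x * g x) ≤
          C * lorentzNorm p₁ q₁ f * lorentzNorm p₂ q₂ g :=
  stmt_6_general n p₁ p₂ q₁ q₂ hq₁ hq₂ r s hr hs
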